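/- arXiv:2405.05867 — 2 statements merged into one kernel-verified Lean document; each statement's English description precedes it below -/
import Mathlib

section
/- Let α be a peak composition with at most one part greater than 2. If α = (2,…,2,k) or α = (2,…,2,k,1) for some k ≥ 2 (possibly with no parts equal to 2), then PYQS_α = QSQ_α. Otherwise — that is, α = (2^a, k, 2^b) or (2^a, k, 2^b, 1) with k ≥ 3 and b ≥ 1 — one has PYQS_α = QSQ_α − QSQ_{s_i·α}, where i is the index with α_i = k and s_i·α is the composition obtained from α by swapping its i-th and (i+1)-st parts. -/
namespace PaperSPIT

/-- The `j`-th part (1-indexed) of a composition presented as a list. -/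
def part (α : List ℕ) (j : ℕ) : ℕ := α.getD (j - 1) 0

/-- The largest part. -/
def maxPart (α : List ℕ) : ℕ := α.foldr max 0

/-- The composition diagram: boxes `(i, j)` (column `i`, row `j`), both 1-indexed,
rows numbered from bottom to top. -/
def cd (α : List ℕ) : Finset (ℕ × ℕ) :=
  (Finset.Icc 1 (maxPart α) ×ˢ Finset.Icc 1 α.length).filter fun p => p.1 ≤ part α p.2

/-- `α` is a composition of `n`. -/
def IsComposition (n : ℕ) (α : List ℕ) : Prop :=
  (∀ a ∈ α, 0 < a) ∧ α.sum = n

/-- `α` is a peak composition of `n`: all parts except possibly the last are `> 1`. -/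
def IsPeakComposition (n : ℕ) (α : List ℕ) : Prop :=
  IsComposition n α ∧ ∀ i, i + 1 < α.length → 1 < α.getD i 0

/-- A standard filling of `cd α`: a bijection from the boxes onto `{1, …, n}`
(normalized to be `0` off the diagram). -/
def IsStandardFilling (α : List ℕ) (T : ℕ × ℕ → ℕ) : Prop :=
  Set.BijOn T (cd α : Set (ℕ × ℕ)) (Set.Icc 1 α.sum) ∧
  ∀ p : ℕ × ℕ, p ∉ cd α → T p = 0

def RowsIncrease (α : List ℕ) (T : ℕ × ℕ → ℕ) : Prop :=
  ∀ i j : ℕ, (i, j) ∈ cd α → (i + 1, j) ∈ cd α → T (i, j) < T (i + 1, j)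

def RowsWeaklyIncrease (α : List ℕ) (T : ℕ × ℕ → ℕ) : Prop :=
  ∀ i j : ℕ, (i, j) ∈ cd α → (i + 1, j) ∈ cd α → T (i, j) ≤ T (i + 1, j)

def FirstColIncreases (α : List ℕ) (T : ℕ × ℕ → ℕ) : Prop :=
  ∀ j : ℕ, (1, j) ∈ cd α → (1, j + 1) ∈ cd α → T (1, j) < T (1, j + 1)

/-- Standard immaculate tableau. -/
def IsSIT (α : List ℕ) (T : ℕ × ℕ → ℕ) : Prop :=
  IsStandardFilling α T ∧ RowsIncrease α T ∧ FirstColIncreases α T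

/-- Peak-tableau condition: for every `1 ≤ k ≤ n` the boxes with entries `≤ k`
form the diagram of a peak composition. -/
def PeakCond (α : List ℕ) (T : ℕ × ℕ → ℕ) : Prop :=
  ∀ k : ℕ, 1 ≤ k → k ≤ α.sum → ∃ β : List ℕ,
    IsPeakComposition k β ∧ (cd α).filter (fun p => T p ≤ k) = cd β

/-- Standard peak immaculate tableau. -/
def IsSPIT (α : List ℕ) (T : ℕ × ℕ → ℕ) : Prop := IsSIT α T ∧ PeakCond α T

def SPITset (α : List ℕ) : Set (ℕ × ℕ → ℕ) := {T | IsSPIT α T}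

/-- The Young triple condition. -/
def YoungTriple (α : List ℕ) (T : ℕ × ℕ → ℕ) : Prop :=
  ∀ k i j : ℕ, i < j → (k, j) ∈ cd α → (k + 1, i) ∈ cd α → T (k, j) ≤ T (k + 1, i) →
    (k + 1, j) ∈ cd α ∧ T (k + 1, j) < T (k + 1, i)

/-- Standard Young composition tableau. -/
def IsSYCT (α : List ℕ) (T : ℕ × ℕ → ℕ) : Prop :=
  IsStandardFilling α T ∧ RowsIncrease α T ∧ FirstColIncreases α T ∧ YoungTriple α T

def SYCTset (α : List ℕ) : Set (ℕ × ℕ → ℕ) := {T | IsSYCT α T}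

/-- Standard peak Young composition tableau. -/
def IsSPYCT (α : List ℕ) (T : ℕ × ℕ → ℕ) : Prop := IsSYCT α T ∧ PeakCond α T

def SPYCTset (α : List ℕ) : Set (ℕ × ℕ → ℕ) := {T | IsSPYCT α T}

/-- Row reading word `w_r`: rows from top to bottom, each row left to right. -/
def wR (α : List ℕ) (T : ℕ × ℕ → ℕ) : List ℕ :=
  ((List.range α.length).reverse.map fun j =>
    (List.range (part α (j + 1))).map fun i => T (i + 1, j + 1)).flatten

/-- The `i`-th column of a filling, read bottom to top. -/
def colList (α : List ℕ) (T : ℕ × ℕ → ℕ) (i : ℕ) : List ℕ :=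
  ((List.range α.length).filter fun j => decide (i ≤ part α (j + 1))).map
    fun j => T (i, j + 1)

/-- Column reading word `w_c`: columns left to right, each column bottom to top. -/
def wC (α : List ℕ) (T : ℕ × ℕ → ℕ) : List ℕ :=
  ((List.range (maxPart α)).map fun i => colList α T (i + 1)).flatten

/-- Young reading word `w_Y`: first column top to bottom, then subsequent columns
bottom to top, columns left to right. -/
def wY (α : List ℕ) (T : ℕ × ℕ → ℕ) : List ℕ :=
  (colList α T 1).reverse ++
    ((List.range (maxPart α - 1)).map fun i => colList α T (i + 2)).flatten

/-- Descent set of a word with distinct letters: `i` such that `i` and `i+1` occur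
and `i` occurs to the right of `i+1`. -/
def DesWord (w : List ℕ) : Finset ℕ :=
  w.toFinset.filter fun i => (i + 1) ∈ w ∧ w.idxOf (i + 1) < w.idxOf i


def setComp (α : List ℕ) : Finset ℕ :=
  (((α.scanl (· + ·) 0).drop 1).dropLast).toFinset

def compOf (n : ℕ) (I : Finset ℕ) : List ℕ :=
  List.zipWith (fun a b => a - b) (I.sort (· ≤ ·) ++ [n]) (0 :: I.sort (· ≤ ·))

def PeakSet (X : Finset ℕ) : Finset ℕ := X.filter fun i => 1 < i ∧ i - 1 ∉ X

noncomputable def Fqs (n : ℕ) (α : List ℕ) : MvPowerSeries ℕ ℤ := fun d =>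
  (Set.ncard {f : Fin n → ℕ |
      (∀ j, 1 ≤ f j) ∧ Monotone f ∧
      (∀ j k : Fin n, (k : ℕ) = (j : ℕ) + 1 → ((j : ℕ) + 1) ∈ setComp α → f j < f k) ∧
      ∀ m : ℕ, d m = (Finset.univ.filter fun j : Fin n => f j = m).card} : ℤ)

noncomputable def Kqs (n : ℕ) (α : List ℕ) : MvPowerSeries ℕ ℤ :=
  (2 ^ ((setComp α).card + 1) : ℕ) •
    ∑ β : Composition n,
      if setComp α ⊆ symmDiff (setComp β.blocks) ((setComp β.blocks).image (· + 1))
      then Fqs n β.blocks else 0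

/-- The quasisymmetric Schur `Q`-function of a peak composition `α` of `n`. -/
noncomputable def QSQ (n : ℕ) (α : List ℕ) : MvPowerSeries ℕ ℤ :=
  ∑ᶠ T ∈ SPITset α, Kqs n (compOf n (PeakSet (DesWord (wC α T))))

/-- The peak Young quasisymmetric Schur function of a peak composition `α` of `n`. -/
noncomputable def PYQS (n : ℕ) (α : List ℕ) : MvPowerSeries ℕ ℤ :=
  ∑ᶠ T ∈ SPYCTset α, Kqs n (compOf n (PeakSet (DesWord (wY α T))))

/-!
The peak condition forces `T (2, j) < T (1, j + 1)` in a standard peak immaculate tableau.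
Hence the first column contains no two consecutive integers, so reversing it does not change
descents and `w_Y` and `w_c` have the same descent set; and the Young triple condition always
holds in the first column. If every row except row `a + 1` has length at most `2`, the remaining
Young triples compare `T (3, a + 1)` with the second boxes above row `a + 1`: there are none for
`(2^a, k)` and `(2^a, k, 1)`, and otherwise they reduce to `T (3, a + 1) < T (2, a + 2)`.
The SPITs violating this inequality correspond bijectively to the SPITs of `s_{a+1}·α`, by
moving the boxes of row `a + 1` from the third column on up to row `a + 2`. This bijection keeps
every column, hence the column reading word, so `QSQ_α = PYQS_α + QSQ_{s_{a+1}·α}`.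
-/

lemma part_eq_zero {α : List ℕ} {j : ℕ} (h : α.length < j) : part α j = 0 :=
  List.getD_eq_default _ _ (by omega)

lemma le_length_of_part_pos {α : List ℕ} {j : ℕ} (h : 0 < part α j) : j ≤ α.length := by
  by_contra hlt
  rw [part_eq_zero (by omega)] at h
  omega

lemma part_le_maxPart (α : List ℕ) (j : ℕ) : part α j ≤ maxPart α := by
  rcases lt_or_ge (j - 1) α.length with h | h
  · rw [part, List.getD_eq_getElem _ _ h]
    exact List.le_max_of_le (List.getElem_mem h) le_rfl
  · rw [part, List.getD_eq_default _ _ h]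
    exact Nat.zero_le _

lemma le_length_of_mem_cd {α : List ℕ} {c j : ℕ} (h : (c, j) ∈ cd α) : j ≤ α.length :=
  (Finset.mem_Icc.1 (Finset.mem_product.1 (Finset.mem_filter.1 h).1).2).2

lemma mem_cd {α : List ℕ} {c j : ℕ} : (c, j) ∈ cd α ↔ 1 ≤ c ∧ 1 ≤ j ∧ c ≤ part α j := by
  simp only [cd, Finset.mem_filter, Finset.mem_product, Finset.mem_Icc]
  refine ⟨fun h => ⟨h.1.1.1, h.1.2.1, h.2⟩, fun ⟨hc, hj, hp⟩ => ?_⟩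
  exact ⟨⟨⟨hc, hp.trans (part_le_maxPart α j)⟩, hj, le_length_of_part_pos (by omega)⟩, hp⟩

lemma mem_colList {α : List ℕ} {T : ℕ × ℕ → ℕ} {c x : ℕ} (hc : 1 ≤ c) :
    x ∈ colList α T c ↔ ∃ j, (c, j) ∈ cd α ∧ T (c, j) = x := by
  simp only [colList, List.mem_map, List.mem_filter, List.mem_range, decide_eq_true_eq]
  constructor
  · rintro ⟨j, ⟨-, hp⟩, rfl⟩
    exact ⟨j + 1, mem_cd.2 ⟨hc, by omega, hp⟩, rfl⟩
  · rintro ⟨j, hcd, rfl⟩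
    obtain ⟨-, hj, hp⟩ := mem_cd.1 hcd
    obtain ⟨i, rfl⟩ : ∃ i, j = i + 1 := ⟨j - 1, by omega⟩
    exact ⟨i, ⟨le_length_of_mem_cd hcd, hp⟩, rfl⟩

lemma wC_eq_colList_one_append (α : List ℕ) (T : ℕ × ℕ → ℕ) :
    wC α T = colList α T 1 ++
      ((List.range (maxPart α - 1)).map fun i => colList α T (i + 2)).flatten := by
  rcases Nat.eq_zero_or_pos (maxPart α) with h | h
  · have hnil : colList α T 1 = [] := by
      refine List.eq_nil_iff_forall_not_mem.2 fun x hx => ?_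
      obtain ⟨j, hj, -⟩ := (mem_colList le_rfl).1 hx
      have := (mem_cd.1 hj).2.2
      have := part_le_maxPart α j
      omega
    simp [wC, h, hnil]
  · obtain ⟨m, hm⟩ : ∃ m, maxPart α = m + 1 := ⟨_, (Nat.succ_pred_eq_of_pos h).symm⟩
    rw [wC, hm, List.range_succ_eq_map]
    simp [List.map_map, Function.comp_def]

lemma IsPeakComposition.two_le_part {m : ℕ} {β : List ℕ} (hβ : IsPeakComposition m β) {j : ℕ}
    (hj : 1 ≤ j) (hlen : j < β.length) : 2 ≤ part β j :=
  hβ.2 (j - 1) (by omega)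

lemma idxOf_append_lt_idxOf_append_iff {u v : List ℕ} {x y : ℕ} (h : ¬(x ∈ u ∧ y ∈ u)) :
    (u ++ v).idxOf x < (u ++ v).idxOf y ↔
      x ∈ u ∧ y ∉ u ∨ x ∉ u ∧ y ∉ u ∧ v.idxOf x < v.idxOf y := by
  have hx : u.idxOf x < u.length ↔ x ∈ u := List.idxOf_lt_length_iff
  have hy : u.idxOf y < u.length ↔ y ∈ u := List.idxOf_lt_length_iff
  rw [List.idxOf_append, List.idxOf_append]
  split_ifs <;> simp_all <;> omega

lemma desWord_perm_append {u₁ u₂ v : List ℕ} (hp : u₁.Perm u₂) (hu : ∀ x ∈ u₁, x + 1 ∉ u₁) :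
    DesWord (u₁ ++ v) = DesWord (u₂ ++ v) := by
  ext i
  have h₁ : ¬(i + 1 ∈ u₁ ∧ i ∈ u₁) := fun h => hu i h.2 h.1
  have h₂ : ¬(i + 1 ∈ u₂ ∧ i ∈ u₂) := by rwa [← hp.mem_iff, ← hp.mem_iff]
  simp only [DesWord, Finset.mem_filter, List.mem_toFinset, List.mem_append,
    idxOf_append_lt_idxOf_append_iff h₁, idxOf_append_lt_idxOf_append_iff h₂, hp.mem_iff]

lemma isSPYCT_iff {α : List ℕ} {T : ℕ × ℕ → ℕ} :
    IsSPYCT α T ↔ IsSPIT α T ∧ YoungTriple α T := by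
  simp only [IsSPYCT, IsSYCT, IsSPIT, IsSIT]
  tauto

namespace IsSPIT

variable {α : List ℕ} {T : ℕ × ℕ → ℕ}

lemma row_lt (hT : IsSPIT α T) {c j : ℕ} (hc : 1 ≤ c) (h : (c + 1, j) ∈ cd α) :
    T (c, j) < T (c + 1, j) := by
  have := mem_cd.1 h
  exact hT.1.2.1 c j (mem_cd.2 ⟨hc, this.2.1, by omega⟩) h

/-- The boxes with entries `≤ T (1, j + 1)` form the diagram of a peak composition with more
than `j` rows, so its row `j` has a second box. -/
lemma col_two_lt_col_one_succ (hT : IsSPIT α T) {j : ℕ} (hj : 1 ≤ j) (h : (1, j + 1) ∈ cd α) :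
    (2, j) ∈ cd α ∧ T (2, j) < T (1, j + 1) := by
  obtain ⟨⟨⟨hbij, -⟩, -, -⟩, hpeak⟩ := hT
  have hm := hbij.mapsTo h
  obtain ⟨β, hβ, hfil⟩ := hpeak _ hm.1 hm.2
  have mem_β : ∀ p, p ∈ cd β ↔ p ∈ cd α ∧ T p ≤ T (1, j + 1) := fun p => by
    rw [← hfil, Finset.mem_filter]
  have hrow : 2 ≤ part β j :=
    hβ.two_le_part hj (le_length_of_mem_cd ((mem_β _).2 ⟨h, le_rfl⟩))
  obtain ⟨h2, hle⟩ := (mem_β (2, j)).1 (mem_cd.2 ⟨by omega, hj, hrow⟩)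
  refine ⟨h2, hle.lt_of_ne fun he => ?_⟩
  simpa using hbij.injOn h2 h he

lemma col_two_lt_col_one (hT : IsSPIT α T) {i j : ℕ} (hi : 1 ≤ i) (hij : i < j)
    (hj : (1, j) ∈ cd α) : (2, i) ∈ cd α ∧ T (2, i) < T (1, j) := by
  induction j, hij using Nat.le_induction with
  | base => exact hT.col_two_lt_col_one_succ hi hj
  | succ j hij ih =>
    obtain ⟨h2j, hlt⟩ := hT.col_two_lt_col_one_succ (by omega) hj
    have h1j : (1, j) ∈ cd α := mem_cd.2 ⟨le_rfl, by omega, (mem_cd.1 h2j).2.2.trans' (by omega)⟩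
    obtain ⟨h2i, hlt'⟩ := ih h1j
    exact ⟨h2i, hlt'.trans ((hT.row_lt le_rfl h2j).trans hlt)⟩

lemma col_one_lt_col_one (hT : IsSPIT α T) {i j : ℕ} (hi : 1 ≤ i) (hij : i < j)
    (hj : (1, j) ∈ cd α) : T (1, i) < T (1, j) := by
  obtain ⟨h2i, hlt⟩ := hT.col_two_lt_col_one hi hij hj
  exact (hT.row_lt le_rfl h2i).trans hlt

lemma not_succ_mem_colList_one (hT : IsSPIT α T) {x : ℕ} (hx : x ∈ colList α T 1) :
    x + 1 ∉ colList α T 1 := by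
  rintro hx'
  obtain ⟨i, hi, rfl⟩ := (mem_colList le_rfl).1 hx
  obtain ⟨j, hj, hij⟩ := (mem_colList le_rfl).1 hx'
  have hi1 := (mem_cd.1 hi).2.1
  have hj1 := (mem_cd.1 hj).2.1
  rcases lt_trichotomy i j with h | rfl | h
  · obtain ⟨h2i, hlt⟩ := hT.col_two_lt_col_one hi1 h hj
    have : T (1, i) < T (2, i) := hT.row_lt le_rfl h2i
    omega
  · omega
  · have := hT.col_one_lt_col_one hj1 h hi
    omega

lemma desWord_wY_eq_desWord_wC (hT : IsSPIT α T) : DesWord (wY α T) = DesWord (wC α T) := by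
  rw [wY, wC_eq_colList_one_append]
  refine desWord_perm_append (List.reverse_perm _) fun x hx hx' => ?_
  exact hT.not_succ_mem_colList_one (List.mem_reverse.1 hx) (List.mem_reverse.1 hx')

-- In the first column the Young triple condition always holds, by `col_two_lt_col_one`.
lemma youngTriple_iff (hT : IsSPIT α T) {r : ℕ}
    (hshort : ∀ j, 1 ≤ j → j ≠ r → part α j ≤ 2) :
    YoungTriple α T ↔ ∀ j, r < j → (2, j) ∈ cd α → (3, r) ∈ cd α → T (3, r) < T (2, j) := by
  constructor
  · intro hY j hrj h2j h3r
    by_contra hle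
    have := mem_cd.1 (hY 2 r j hrj h2j h3r (not_lt.1 hle)).1
    have := hshort j (by omega) (by omega)
    omega
  · intro h c i j hij hcj hci hle
    obtain ⟨hc, hj, hcj'⟩ := mem_cd.1 hcj
    obtain ⟨-, hi, hci'⟩ := mem_cd.1 hci
    rcases Nat.lt_or_ge c 2 with hc1 | hc2
    · obtain rfl : c = 1 := by omega
      exact absurd hle (not_le.2 (hT.col_two_lt_col_one hi hij hcj).2)
    · obtain rfl : i = r := by
        by_contra hne
        have := hshort i hi hne
        omega
      obtain rfl : c = 2 := by
        have := hshort j hj (by omega)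
        omega
      exact absurd hle (not_le.2 (h j hij hcj hci))

lemma youngTriple_of_part_le_one (hT : IsSPIT α T) {r : ℕ}
    (hshort : ∀ j, 1 ≤ j → j ≠ r → part α j ≤ 2) (htop : ∀ j, r < j → part α j ≤ 1) :
    YoungTriple α T := by
  refine (hT.youngTriple_iff hshort).2 fun j hrj h2j _ => ?_
  have := (mem_cd.1 h2j).2.2
  have := htop j hrj
  omega

lemma youngTriple_iff_lt (hT : IsSPIT α T) {a : ℕ}
    (hshort : ∀ j, 1 ≤ j → j ≠ a + 1 → part α j ≤ 2) (hnext : part α (a + 2) = 2) :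
    YoungTriple α T ↔ ((3, a + 1) ∈ cd α → T (3, a + 1) < T (2, a + 2)) := by
  rw [hT.youngTriple_iff hshort]
  refine ⟨fun h h3 => h (a + 2) (by omega) (mem_cd.2 ⟨by omega, by omega, hnext.ge⟩) h3,
    fun h j hj h2j h3 => ?_⟩
  rcases (show j = a + 2 ∨ a + 2 < j by omega) with rfl | hj'
  · exact h h3
  · have h1j : (1, j) ∈ cd α := mem_cd.2 ⟨le_rfl, by omega, (mem_cd.1 h2j).2.2.trans' (by omega)⟩
    calc T (3, a + 1) < T (2, a + 2) := h h3
      _ < T (1, j) := (hT.col_two_lt_col_one (by omega) hj' h1j).2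
      _ < T (2, j) := hT.row_lt le_rfl h2j

end IsSPIT

lemma SPYCTset_eq_SPITset {α : List ℕ} {r : ℕ} (hshort : ∀ j, 1 ≤ j → j ≠ r → part α j ≤ 2)
    (htop : ∀ j, r < j → part α j ≤ 1) : SPYCTset α = SPITset α :=
  Set.ext fun _ => isSPYCT_iff.trans
    ⟨And.left, fun hT => ⟨hT, hT.youngTriple_of_part_le_one hshort htop⟩⟩

theorem PYQS_eq_QSQ (n : ℕ) {α : List ℕ} {r : ℕ} (hshort : ∀ j, 1 ≤ j → j ≠ r → part α j ≤ 2)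
    (htop : ∀ j, r < j → part α j ≤ 1) : PYQS n α = QSQ n α := by
  rw [PYQS, QSQ, SPYCTset_eq_SPITset hshort htop]
  exact finsum_mem_congr rfl fun T hT => by rw [IsSPIT.desWord_wY_eq_desWord_wC hT]

/-- `swapParts α a` is `s_{a+1}·α`: it exchanges the parts in rows `a + 1` and `a + 2`. -/
def swapParts : List ℕ → ℕ → List ℕ
  | x :: y :: l, 0 => y :: x :: l
  | x :: l, a + 1 => x :: swapParts l a
  | l, _ => l

lemma swapParts_perm (α : List ℕ) (a : ℕ) : (swapParts α a).Perm α := by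
  induction α, a using swapParts.induct with
  | case1 x y l => exact List.Perm.swap x y l
  | case2 x l a ih => simpa [swapParts] using ih.cons x
  | case3 l a h1 h2 => simp [swapParts]

lemma swapParts_swapParts (α : List ℕ) (a : ℕ) : swapParts (swapParts α a) a = α := by
  induction α, a using swapParts.induct with
  | case1 x y l => simp [swapParts]
  | case2 x l a ih => simp [swapParts, ih]
  | case3 l a h1 h2 =>
    rcases l with _ | ⟨x, _ | ⟨y, l⟩⟩ <;> rcases a with _ | a <;> simp_all [swapParts]

lemma getD_swapParts {α : List ℕ} {a : ℕ} (h : a + 2 ≤ α.length) (i : ℕ) :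
    (swapParts α a).getD i 0 = α.getD (Equiv.swap a (a + 1) i) 0 := by
  induction α, a using swapParts.induct generalizing i with
  | case1 x y l => rcases i with _ | _ | i <;> simp [swapParts, Equiv.swap_apply_def]
  | case2 x l a ih =>
    rcases i with _ | i
    · simp [swapParts, Equiv.swap_apply_def]
    · simp only [swapParts, List.getD_cons_succ, ih (by simpa using h)]
      have : Equiv.swap (a + 1) (a + 1 + 1) (i + 1) = Equiv.swap a (a + 1) i + 1 := by
        simp only [Equiv.swap_apply_def]
        split_ifs <;> omega
      rw [this, List.getD_cons_succ]
  | case3 l a h1 h2 =>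
    rcases l with _ | ⟨x, _ | ⟨y, l⟩⟩ <;> rcases a with _ | a <;> simp_all

lemma part_swapParts {α : List ℕ} {a j : ℕ} (h : a + 2 ≤ α.length) (hj : 1 ≤ j) :
    part (swapParts α a) j = part α (Equiv.swap (a + 1) (a + 2) j) := by
  rw [part, part, getD_swapParts h]
  congr 1
  simp only [Equiv.swap_apply_def]
  split_ifs <;> omega

lemma part_swapParts_of_ne {α : List ℕ} {a j : ℕ} (h : a + 2 ≤ α.length) (hj : 1 ≤ j)
    (h1 : j ≠ a + 1) (h2 : j ≠ a + 2) : part (swapParts α a) j = part α j := by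
  rw [part_swapParts h hj, Equiv.swap_apply_of_ne_of_ne h1 h2]

lemma IsPeakComposition.swapParts {m : ℕ} {β : List ℕ} (hβ : IsPeakComposition m β) {a : ℕ}
    (hx : 2 ≤ part β (a + 1)) (hy : 2 ≤ part β (a + 2)) :
    IsPeakComposition m (PaperSPIT.swapParts β a) := by
  have hp := swapParts_perm β a
  refine ⟨⟨fun x hx => hβ.1.1 x (hp.mem_iff.1 hx), hp.sum_eq.trans hβ.1.2⟩, fun i hi => ?_⟩
  have hlen := le_length_of_part_pos (show 0 < part β (a + 2) by omega)
  rw [hp.length_eq] at hi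
  show 1 < part (PaperSPIT.swapParts β a) (i + 1)
  rw [part_swapParts hlen (by omega)]
  rcases (show i = a ∨ i = a + 1 ∨ (i + 1 ≠ a + 1 ∧ i + 1 ≠ a + 2) by omega) with
    rfl | rfl | ⟨h1, h2⟩
  · rw [Equiv.swap_apply_left]; omega
  · rw [Equiv.swap_apply_right]; omega
  · rw [Equiv.swap_apply_of_ne_of_ne h1 h2]
    exact hβ.two_le_part (by omega) hi

def rowSwap (a : ℕ) (p : ℕ × ℕ) : ℕ × ℕ :=
  if 3 ≤ p.1 then (p.1, Equiv.swap (a + 1) (a + 2) p.2) else p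

lemma rowSwap_involutive (a : ℕ) : Function.Involutive (rowSwap a) := by
  rintro ⟨c, j⟩
  by_cases hc : 3 ≤ c <;> simp [rowSwap, hc]

lemma rowSwap_of_le_two {a c j : ℕ} (hc : c ≤ 2) : rowSwap a (c, j) = (c, j) :=
  if_neg (by omega)

lemma rowSwap_of_three_le {a c j : ℕ} (hc : 3 ≤ c) :
    rowSwap a (c, j) = (c, Equiv.swap (a + 1) (a + 2) j) :=
  if_pos hc

lemma rowSwap_of_ne {a c j : ℕ} (h1 : j ≠ a + 1) (h2 : j ≠ a + 2) : rowSwap a (c, j) = (c, j) := by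
  simp [rowSwap, Equiv.swap_apply_of_ne_of_ne h1 h2]

lemma mem_cd_swapParts {α : List ℕ} {a : ℕ} (hx : 2 ≤ part α (a + 1))
    (hy : 2 ≤ part α (a + 2)) (p : ℕ × ℕ) : p ∈ cd (swapParts α a) ↔ rowSwap a p ∈ cd α := by
  obtain ⟨c, j⟩ := p
  rcases Nat.eq_zero_or_pos j with rfl | hj
  · simp [mem_cd, rowSwap, Equiv.swap_apply_def]
  simp only [mem_cd, rowSwap, part_swapParts (le_length_of_part_pos (show 0 < part α (a + 2) by omega)) hj]
  rcases (show j = a + 1 ∨ j = a + 2 ∨ (j ≠ a + 1 ∧ j ≠ a + 2) by omega) with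
    rfl | rfl | ⟨h1, h2⟩
  · simp only [Equiv.swap_apply_left]
    split_ifs <;> simp only [mem_cd] <;> omega
  · simp only [Equiv.swap_apply_right]
    split_ifs <;> simp only [mem_cd] <;> omega
  · rw [Equiv.swap_apply_of_ne_of_ne h1 h2, ite_self, mem_cd]

lemma rowSwap_mem_cd {α : List ℕ} {a : ℕ} (hx : part α (a + 1) ≤ 2) (hy : part α (a + 2) ≤ 2)
    (p : ℕ × ℕ) : rowSwap a p ∈ cd α ↔ p ∈ cd α := by
  obtain ⟨c, j⟩ := p
  by_cases hc : 3 ≤ c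
  · rw [rowSwap_of_three_le hc, mem_cd, mem_cd]
    rcases (show j = a + 1 ∨ j = a + 2 ∨ (j ≠ a + 1 ∧ j ≠ a + 2) by omega) with
      rfl | rfl | ⟨h1, h2⟩
    · rw [Equiv.swap_apply_left]; omega
    · rw [Equiv.swap_apply_right]; omega
    · rw [Equiv.swap_apply_of_ne_of_ne h1 h2]
  · rw [rowSwap_of_le_two (by omega)]

lemma exists_isPeakComposition_rowSwap {m a : ℕ} {β : List ℕ} (hβ : IsPeakComposition m β)
    (h : (3, a + 1) ∈ cd β → (2, a + 2) ∈ cd β) :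
    ∃ β', IsPeakComposition m β' ∧ ∀ p, p ∈ cd β' ↔ rowSwap a p ∈ cd β := by
  by_cases hbig : 3 ≤ part β (a + 1) ∨ 3 ≤ part β (a + 2)
  · obtain ⟨hx, hy⟩ : 2 ≤ part β (a + 1) ∧ 2 ≤ part β (a + 2) := by
      rcases hbig with h3 | h3
      · exact ⟨by omega, (mem_cd.1 (h (mem_cd.2 ⟨by omega, by omega, h3⟩))).2.2⟩
      · exact ⟨hβ.two_le_part (by omega) (le_length_of_part_pos (show 0 < part β (a + 2) by omega)),
          by omega⟩
    exact ⟨swapParts β a, hβ.swapParts hx hy, mem_cd_swapParts hx hy⟩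
  · exact ⟨β, hβ, fun p => (rowSwap_mem_cd (by omega) (by omega) p).symm⟩

def RowSwappable (α : List ℕ) (a : ℕ) (T : ℕ × ℕ → ℕ) : Prop :=
  (3, a + 1) ∈ cd α → T (2, a + 2) < T (3, a + 1)

section RowSwap

variable {α : List ℕ} {a : ℕ} {T : ℕ × ℕ → ℕ}

lemma IsStandardFilling.comp_rowSwap (hx : 2 ≤ part α (a + 1)) (hy : 2 ≤ part α (a + 2))
    (hT : IsStandardFilling α T) : IsStandardFilling (swapParts α a) (T ∘ rowSwap a) := by
  have hσ : Set.BijOn (rowSwap a) (cd (swapParts α a) : Set (ℕ × ℕ)) (cd α) :=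
    Set.InvOn.bijOn ⟨fun p _ => rowSwap_involutive a p, fun p _ => rowSwap_involutive a p⟩
      (fun p hp => (mem_cd_swapParts hx hy p).1 hp)
      (fun q hq => (mem_cd_swapParts hx hy _).2 (by rwa [rowSwap_involutive]))
  refine ⟨(swapParts_perm α a).sum_eq ▸ hT.1.comp hσ, fun p hp => hT.2 _ ?_⟩
  rwa [← mem_cd_swapParts hx hy]

namespace IsSPIT

lemma rowsIncrease_comp_rowSwap (hT : IsSPIT α T) (hx : 2 ≤ part α (a + 1))
    (hy : 2 ≤ part α (a + 2)) (hs : RowSwappable α a T) :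
    RowsIncrease (swapParts α a) (T ∘ rowSwap a) := by
  intro c j h1 h2
  have m1 := (mem_cd_swapParts hx hy _).1 h1
  have m2 := (mem_cd_swapParts hx hy _).1 h2
  simp only [Function.comp]
  rcases (show c ≤ 1 ∨ c = 2 ∨ 3 ≤ c by omega) with hc | rfl | hc
  · simp (disch := omega) only [rowSwap_of_le_two] at m1 m2 ⊢
    exact hT.1.2.1 c j m1 m2
  · simp (disch := omega) only [rowSwap_of_le_two, rowSwap_of_three_le] at m1 m2 ⊢
    rcases (show j = a + 1 ∨ j = a + 2 ∨ (j ≠ a + 1 ∧ j ≠ a + 2) by omega) with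
      rfl | rfl | ⟨hj1, hj2⟩
    · rw [Equiv.swap_apply_left] at m2 ⊢
      have h1 : (1, a + 2) ∈ cd α := mem_cd.2 ⟨le_rfl, by omega, by omega⟩
      have h2 : (2, a + 2) ∈ cd α := mem_cd.2 ⟨by omega, by omega, hy⟩
      calc T (2, a + 1) < T (1, a + 2) := (hT.col_two_lt_col_one_succ (by omega) h1).2
        _ < T (2, a + 2) := hT.row_lt le_rfl h2
        _ < T (3, a + 2) := hT.row_lt (by omega) m2
    · rw [Equiv.swap_apply_right] at m2 ⊢
      exact hs m2
    · rw [Equiv.swap_apply_of_ne_of_ne hj1 hj2] at m2 ⊢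
      exact hT.row_lt (by omega) m2
  · simp (disch := omega) only [rowSwap_of_three_le] at m1 m2 ⊢
    exact hT.1.2.1 c _ m1 m2

lemma firstColIncreases_comp_rowSwap (hT : IsSPIT α T) (hx : 2 ≤ part α (a + 1))
    (hy : 2 ≤ part α (a + 2)) : FirstColIncreases (swapParts α a) (T ∘ rowSwap a) := by
  intro j h1 h2
  simp (disch := omega) only [mem_cd_swapParts hx hy, rowSwap_of_le_two] at h1 h2
  simpa (disch := omega) only [Function.comp, rowSwap_of_le_two] using hT.1.2.2 j h1 h2

lemma peakCond_comp_rowSwap (hT : IsSPIT α T) (hx : 2 ≤ part α (a + 1))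
    (hy : 2 ≤ part α (a + 2)) (hs : RowSwappable α a T) :
    PeakCond (swapParts α a) (T ∘ rowSwap a) := by
  intro m hm1 hm2
  rw [(swapParts_perm α a).sum_eq] at hm2
  obtain ⟨β, hβ, hfil⟩ := hT.2 m hm1 hm2
  have mem_β : ∀ p, p ∈ cd β ↔ p ∈ cd α ∧ T p ≤ m := fun p => by
    rw [← hfil, Finset.mem_filter]
  obtain ⟨β', hβ', hmem⟩ := exists_isPeakComposition_rowSwap hβ fun h3 => by
    obtain ⟨h3α, h3m⟩ := (mem_β _).1 h3
    exact (mem_β _).2 ⟨mem_cd.2 ⟨by omega, by omega, hy⟩, ((hs h3α).trans_le h3m).le⟩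
  refine ⟨β', hβ', Finset.ext fun p => ?_⟩
  rw [Finset.mem_filter, hmem, mem_β, mem_cd_swapParts hx hy, Function.comp]

lemma comp_rowSwap (hT : IsSPIT α T) (hx : 2 ≤ part α (a + 1)) (hy : 2 ≤ part α (a + 2))
    (hs : RowSwappable α a T) :
    IsSPIT (swapParts α a) (T ∘ rowSwap a) ∧ RowSwappable (swapParts α a) a (T ∘ rowSwap a) := by
  refine ⟨⟨⟨hT.1.1.comp_rowSwap hx hy, hT.rowsIncrease_comp_rowSwap hx hy hs,
    hT.firstColIncreases_comp_rowSwap hx hy⟩, hT.peakCond_comp_rowSwap hx hy hs⟩, fun h3 => ?_⟩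
  rw [mem_cd_swapParts hx hy, rowSwap_of_three_le le_rfl, Equiv.swap_apply_left] at h3
  simp only [Function.comp, rowSwap_of_le_two (show 2 ≤ 2 from le_rfl),
    rowSwap_of_three_le (show 3 ≤ 3 from le_rfl), Equiv.swap_apply_left]
  exact hT.row_lt (by omega) h3

end IsSPIT

lemma bijOn_comp_rowSwap (hx : 2 ≤ part α (a + 1)) (hy : 2 ≤ part α (a + 2)) :
    Set.BijOn (· ∘ rowSwap a) {T | IsSPIT α T ∧ RowSwappable α a T}
      {T | IsSPIT (swapParts α a) T ∧ RowSwappable (swapParts α a) a T} := by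
  have hlen := le_length_of_part_pos (show 0 < part α (a + 2) by omega)
  have hx' : 2 ≤ part (swapParts α a) (a + 1) := by
    rwa [part_swapParts hlen (by omega), Equiv.swap_apply_left]
  have hy' : 2 ≤ part (swapParts α a) (a + 2) := by
    rwa [part_swapParts hlen (by omega), Equiv.swap_apply_right]
  have hinv : ∀ T : ℕ × ℕ → ℕ, T ∘ rowSwap a ∘ rowSwap a = T :=
    fun T => funext fun p => congrArg T (rowSwap_involutive a p)
  refine Set.InvOn.bijOn (f' := (· ∘ rowSwap a)) ⟨fun T _ => hinv T, fun T _ => hinv T⟩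
    (fun T hT => hT.1.comp_rowSwap hx hy hT.2) fun T hT => ?_
  have := hT.1.comp_rowSwap hx' hy' hT.2
  rwa [swapParts_swapParts] at this

end RowSwap

-- As row `a + 2` has length `2`, each column from the third on meets at most one of the two
-- adjacent exchanged rows, so its reading is unchanged.
lemma colList_swapParts {α : List ℕ} {a : ℕ} (hx : 2 ≤ part α (a + 1))
    (hy : part α (a + 2) = 2) (T : ℕ × ℕ → ℕ) (c : ℕ) :
    colList (swapParts α a) (T ∘ rowSwap a) c = colList α T c := by
  have hlen := le_length_of_part_pos (show 0 < part α (a + 2) by omega)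
  obtain ⟨r, hr⟩ : ∃ r, α.length = a + 2 + r := ⟨α.length - (a + 2), by omega⟩
  have segment : ∀ l : List ℕ, (∀ j ∈ l, j + 1 ≠ a + 1 ∧ j + 1 ≠ a + 2) →
      (l.filter fun j => decide (c ≤ part (swapParts α a) (j + 1))).map
        (fun j => (T ∘ rowSwap a) (c, j + 1)) =
      (l.filter fun j => decide (c ≤ part α (j + 1))).map fun j => T (c, j + 1) := by
    intro l hl
    rw [List.filter_congr fun j hj => by
      rw [part_swapParts_of_ne hlen (by omega) (hl j hj).1 (hl j hj).2]]
    refine List.map_congr_left fun j hj => congrArg T ?_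
    have hj := hl j (List.mem_of_mem_filter hj)
    exact rowSwap_of_ne hj.1 hj.2
  simp only [colList, (swapParts_perm α a).length_eq, hr, List.range_add, List.filter_append,
    List.map_append]
  rw [segment (List.range a) fun j hj => by simp at hj; omega,
    segment ((List.range r).map (a + 2 + ·)) fun j hj => by
      obtain ⟨x, -, rfl⟩ := List.mem_map.1 hj; omega]
  have hrange : List.map (fun x => a + x) (List.range 2) = [a, a + 1] := by
    simp [List.range_succ]
  have p1 : part (swapParts α a) (a + 1) = 2 := by
    rwa [part_swapParts hlen (by omega), Equiv.swap_apply_left]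
  have p2 : part (swapParts α a) (a + 1 + 1) = part α (a + 1) := by
    rw [part_swapParts hlen (by omega), Equiv.swap_apply_right]
  have hy' : part α (a + 1 + 1) = 2 := hy
  rw [hrange, List.append_left_inj, List.append_right_inj]
  by_cases hc : 3 ≤ c
  · simp [List.filter_cons, p1, p2, hy', rowSwap_of_three_le hc, show ¬c ≤ 2 by omega]
    split_ifs <;> simp
  · simp [p1, p2, hy', rowSwap_of_le_two (show c ≤ 2 by omega), show c ≤ 2 by omega,
      show c ≤ part α (a + 1) by omega]

lemma wC_swapParts {α : List ℕ} {a : ℕ} (hx : 2 ≤ part α (a + 1)) (hy : part α (a + 2) = 2)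
    (T : ℕ × ℕ → ℕ) : wC (swapParts α a) (T ∘ rowSwap a) = wC α T := by
  have hmax : maxPart (swapParts α a) = maxPart α := (swapParts_perm α a).foldr_eq _
  simp only [wC, hmax, colList_swapParts hx hy]

lemma SPITset_finite (α : List ℕ) : (SPITset α).Finite := by
  refine (Set.finite_range fun (f : cd α → Fin (α.sum + 1)) (p : ℕ × ℕ) =>
    if h : p ∈ cd α then (f ⟨p, h⟩ : ℕ) else 0).subset fun T hT => ?_
  refine ⟨fun p => ⟨T p, Nat.lt_succ_of_le (hT.1.1.1.mapsTo p.2).2⟩, funext fun p => ?_⟩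
  by_cases h : p ∈ cd α
  · simp [h]
  · simp [h, hT.1.1.2 p h]

theorem QSQ_eq_PYQS_add_QSQ_swapParts (n : ℕ) {α : List ℕ} {a : ℕ}
    (hshort : ∀ j, 1 ≤ j → j ≠ a + 1 → part α j ≤ 2) (hlong : 3 ≤ part α (a + 1))
    (hnext : part α (a + 2) = 2) : QSQ n α = PYQS n α + QSQ n (swapParts α a) := by
  have h3 : (3, a + 1) ∈ cd α := mem_cd.2 ⟨by omega, by omega, hlong⟩
  have h2 : (2, a + 2) ∈ cd α := mem_cd.2 ⟨by omega, by omega, hnext.ge⟩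
  have hcompl : SPITset α \ SPYCTset α = {T | IsSPIT α T ∧ RowSwappable α a T} := by
    ext T
    simp only [Set.mem_sdiff, SPITset, SPYCTset, Set.mem_ofPred_eq, isSPYCT_iff]
    refine ⟨fun ⟨hT, hY⟩ => ⟨hT, fun _ => ?_⟩, fun ⟨hT, hs⟩ => ⟨hT, fun ⟨_, hY⟩ => ?_⟩⟩
    · have hle : T (2, a + 2) ≤ T (3, a + 1) :=
        not_lt.1 fun h => hY ⟨hT, (hT.youngTriple_iff_lt hshort hnext).2 fun _ => h⟩
      exact hle.lt_of_ne fun he => by simpa using hT.1.1.1.injOn h2 h3 he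
    · exact (hs h3).not_gt ((hT.youngTriple_iff_lt hshort hnext).1 hY h3)
  have hswapped : {T | IsSPIT (swapParts α a) T ∧ RowSwappable (swapParts α a) a T} =
      SPITset (swapParts α a) := by
    refine Set.ext fun T => and_iff_left_of_imp fun _ h3' => absurd h3' ?_
    rw [mem_cd_swapParts (by omega) hnext.ge, rowSwap_of_three_le le_rfl,
      Equiv.swap_apply_left, mem_cd]
    omega
  have hbij := bijOn_comp_rowSwap (a := a) (by omega) hnext.ge
  rw [← hcompl, hswapped] at hbij
  have hsub : SPYCTset α ⊆ SPITset α := fun T hT => (isSPYCT_iff.1 hT).1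
  rw [QSQ, QSQ, PYQS, ← finsum_mem_add_sdiff hsub (SPITset_finite α)]
  congr 1
  · exact finsum_mem_congr rfl fun T hT => by
      rw [IsSPIT.desWord_wY_eq_desWord_wC (isSPYCT_iff.1 hT).1]
  · exact finsum_mem_eq_of_bijOn _ hbij fun T _ => by rw [wC_swapParts (by omega) hnext]

def hookLike (a k b e : ℕ) : List ℕ :=
  List.replicate a 2 ++ k :: (List.replicate b 2 ++ List.replicate e 1)

lemma part_hookLike (a k b e : ℕ) {j : ℕ} (hj : 1 ≤ j) :
    part (hookLike a k b e) j =
      if j ≤ a then 2 else if j = a + 1 then k else if j ≤ a + 1 + b then 2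
      else if j ≤ a + 1 + b + e then 1 else 0 := by
  simp only [part, hookLike, List.getD_eq_getElem?_getD, List.getElem?_append,
    List.getElem?_cons, List.getElem?_replicate, List.length_replicate]
  split_ifs <;> simp_all <;> omega

lemma hookLike_swapParts (a k b e : ℕ) :
    swapParts (hookLike a k (b + 1) e) a = hookLike (a + 1) k b e := by
  induction a with
  | zero => simp [hookLike, swapParts, List.replicate_succ]
  | succ a ih => simpa [hookLike, List.replicate_succ, swapParts] using ih

lemma PYQS_hookLike_eq_QSQ (n a k e : ℕ) :
    PYQS n (hookLike a k 0 e) = QSQ n (hookLike a k 0 e) :=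
  PYQS_eq_QSQ n (r := a + 1)
    (fun j hj _ => by rw [part_hookLike _ _ _ _ hj]; split_ifs <;> omega)
    (fun j hj => by rw [part_hookLike _ _ _ _ (by omega)]; split_ifs <;> omega)

lemma QSQ_hookLike_eq (n a k b e : ℕ) (hk : 3 ≤ k) :
    QSQ n (hookLike a k (b + 1) e) =
      PYQS n (hookLike a k (b + 1) e) + QSQ n (hookLike (a + 1) k b e) := by
  rw [← hookLike_swapParts]
  refine QSQ_eq_PYQS_add_QSQ_swapParts n (fun j hj _ => ?_) ?_ ?_ <;>
    rw [part_hookLike _ _ _ _ (by omega)] <;> split_ifs <;> omega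

theorem PYQS_hook_like_general (n : ℕ) (α : List ℕ) :
    ((∀ a k : ℕ, 2 ≤ k →
        (α = List.replicate a 2 ++ [k] ∨ α = List.replicate a 2 ++ [k, 1]) →
        PYQS n α = QSQ n α) ∧
     (∀ a b k : ℕ, 3 ≤ k → 1 ≤ b →
        α = List.replicate a 2 ++ k :: List.replicate b 2 →
        PYQS n α =
          QSQ n α - QSQ n (List.replicate a 2 ++ 2 :: k :: List.replicate (b - 1) 2)) ∧
     (∀ a b k : ℕ, 3 ≤ k → 1 ≤ b →
        α = List.replicate a 2 ++ k :: List.replicate b 2 ++ [1] →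
        PYQS n α =
          QSQ n α -
            QSQ n (List.replicate a 2 ++ 2 :: k :: List.replicate (b - 1) 2 ++ [1]))) := by
  refine ⟨?_, ?_, ?_⟩
  · rintro a k - (rfl | rfl)
    · simpa [hookLike] using PYQS_hookLike_eq_QSQ n a k 0
    · simpa [hookLike] using PYQS_hookLike_eq_QSQ n a k 1
  · rintro a (_ | b) k hk hb rfl
    · exact absurd hb (by omega)
    rw [eq_sub_iff_add_eq, eq_comm]
    simpa [hookLike, List.replicate_succ'] using QSQ_hookLike_eq n a k b 0 hk
  · rintro a (_ | b) k hk hb rfl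
    · exact absurd hb (by omega)
    rw [eq_sub_iff_add_eq, eq_comm]
    simpa [hookLike, List.replicate_succ'] using QSQ_hookLike_eq n a k b 1 hk

/-- Let `α` be a peak composition with at most one part greater than `2`.
If `α = (2^a, k)` or `α = (2^a, k, 1)` with `k ≥ 2`, then `PYQS_α = QSQ_α`; otherwise,
i.e. `α = (2^a, k, 2^b)` or `α = (2^a, k, 2^b, 1)` with `k ≥ 3` and `b ≥ 1`, one has
`PYQS_α = QSQ_α − QSQ_{s_i·α}` where `s_i·α` swaps the part `k` with the following `2`. -/
theorem PYQS_hook_like (n : ℕ) (α : List ℕ) (hα : IsPeakComposition n α)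
    (hone : α.countP (fun a => decide (2 < a)) ≤ 1) :
    ((∀ a k : ℕ, 2 ≤ k →
        (α = List.replicate a 2 ++ [k] ∨ α = List.replicate a 2 ++ [k, 1]) →
        PYQS n α = QSQ n α) ∧
     (∀ a b k : ℕ, 3 ≤ k → 1 ≤ b →
        α = List.replicate a 2 ++ k :: List.replicate b 2 →
        PYQS n α =
          QSQ n α - QSQ n (List.replicate a 2 ++ 2 :: k :: List.replicate (b - 1) 2)) ∧
     (∀ a b k : ℕ, 3 ≤ k → 1 ≤ b →
        α = List.replicate a 2 ++ k :: List.replicate b 2 ++ [1] →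
        PYQS n α =
          QSQ n α -
            QSQ n (List.replicate a 2 ++ 2 :: k :: List.replicate (b - 1) 2 ++ [1]))) :=
  PYQS_hook_like_general n α

end PaperSPIT
end

section
/- Let λ be a peak partition of n with every part at most 3. Then |SPYT(λ)| · ∏_{c ∈ cd(λ)} ĥ_λ(c) = n!, where λ′_i := #{j : λ_j ≥ i} denotes the length of column i of cd(λ), and for a box (i,j) ∈ cd(λ) (column i, row j) one defines ĥ_λ((i,j)) := λ′_1 − j + λ′_2 − j + λ_j if i = 1; ĥ_λ((i,j)) := λ′_1 − j + λ′_2 − j + λ_j − 1 if i = 2; and ĥ_λ((i,j)) := λ′_3 − j + 1 if i = 3. -/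
/-!
A peak partition with parts at most `3` is `(3^a, 2^b, 1^c)` with `c ≤ 1`. In a standard peak
Young tableau the entry `n` sits in an outer corner, and deleting it leaves a standard peak Young
tableau of the smaller shape; the corner at the end of the last row of length `2` is excluded when
`c = 1`, since deleting it would leave two rows of length `1`. This gives a recursion for
`|SPYT(λ)|` which is also satisfied by `n! (2b + c + 1) / (a! (2a + 2b + c + 1)!)`. Peeling off the
bottom row shows `(2b + c + 1) ∏ ĥ = a! (2a + 2b + c + 1)!`, and the two formulas multiply to `n!`.
-/

namespace PaperSPIT

/-- Columns increase from bottom to top. -/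
def ColsIncrease (l : List ℕ) (T : ℕ × ℕ → ℕ) : Prop :=
  ∀ i j : ℕ, (i, j) ∈ cd l → (i, j + 1) ∈ cd l → T (i, j) < T (i, j + 1)

/-- A standard Young tableau of (partition) shape `l`. -/
def IsSYT (l : List ℕ) (T : ℕ × ℕ → ℕ) : Prop :=
  IsStandardFilling l T ∧ RowsIncrease l T ∧ ColsIncrease l T

/-- The set of standard peak Young tableaux of shape `l`. -/
def SPYTset (l : List ℕ) : Set (ℕ × ℕ → ℕ) := {T | IsSYT l T ∧ PeakCond l T}

/-- `c_i(l) = λ′_i`: the number of boxes in column `i` of `cd l`. -/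
def colLen (l : List ℕ) (i : ℕ) : ℕ := l.countP fun a => decide (i ≤ a)

/-- The hook length `ĥ_λ` of a box of `cd l` (for partitions with parts at most `3`). -/
def hhat (l : List ℕ) (p : ℕ × ℕ) : ℕ :=
  if p.1 = 1 then colLen l 1 - p.2 + (colLen l 2 - p.2) + part l p.2
  else if p.1 = 2 then colLen l 1 - p.2 + (colLen l 2 - p.2) + part l p.2 - 1
  else colLen l 3 - p.2 + 1

open Finset

lemma part_mem {l : List ℕ} {j : ℕ} (hj : 1 ≤ j) (hjl : j ≤ l.length) : part l j ∈ l := by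
  rw [part, List.getD_eq_getElem _ _ (by omega)]
  exact List.getElem_mem _

lemma mem_cd_s19 {l : List ℕ} {p : ℕ × ℕ} :
    p ∈ cd l ↔ 1 ≤ p.1 ∧ 1 ≤ p.2 ∧ p.2 ≤ l.length ∧ p.1 ≤ part l p.2 := by
  simp only [cd, mem_filter, mem_product, mem_Icc]
  exact ⟨fun ⟨⟨⟨h₁, _⟩, h₂, h₃⟩, h₄⟩ => ⟨h₁, h₂, h₃, h₄⟩,
    fun ⟨h₁, h₂, h₃, h₄⟩ => ⟨⟨⟨h₁, List.le_max_of_le' 0 (part_mem h₂ h₃) h₄⟩, h₂, h₃⟩, h₄⟩⟩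

lemma cd_nil : cd [] = ∅ := rfl

lemma part_cons_succ (x : ℕ) (l : List ℕ) {j : ℕ} (hj : 1 ≤ j) :
    part (x :: l) (j + 1) = part l j := by
  obtain ⟨j, rfl⟩ := Nat.exists_eq_add_of_le' hj
  rfl

lemma cd_cons (x : ℕ) (l : List ℕ) :
    cd (x :: l) = Icc 1 x ×ˢ {1} ∪ (cd l).image (Prod.map id (· + 1)) := by
  ext ⟨i, j⟩
  simp only [mem_union, mem_product, mem_Icc, mem_singleton, mem_image, Prod.exists, Prod.map,
    id, Prod.mk.injEq, mem_cd_s19, List.length_cons]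
  constructor
  · rintro ⟨hi, hj, hjl, hij⟩
    rcases Nat.lt_or_ge j 2 with h | h
    · obtain rfl : j = 1 := by omega
      exact Or.inl ⟨⟨hi, hij⟩, rfl⟩
    · refine Or.inr ⟨i, j - 1, ⟨hi, by omega, by omega, ?_⟩, rfl, by omega⟩
      rwa [← part_cons_succ x l (by omega), Nat.sub_add_cancel (by omega)]
  · rintro (⟨⟨hi, hix⟩, rfl⟩ | ⟨i, j, ⟨hi, hj, hjl, hij⟩, rfl, rfl⟩)
    · exact ⟨hi, le_rfl, by omega, hix⟩
    · exact ⟨hi, by omega, by omega, by rwa [part_cons_succ x l hj]⟩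

lemma rowsIncrease_iff {l : List ℕ} {T : ℕ × ℕ → ℕ} :
    RowsIncrease l T ↔ ∀ p ∈ cd l, (p.1 + 1, p.2) ∈ cd l → T p < T (p.1 + 1, p.2) :=
  ⟨fun h p => h p.1 p.2, fun h i j => h (i, j)⟩

lemma colsIncrease_iff {l : List ℕ} {T : ℕ × ℕ → ℕ} :
    ColsIncrease l T ↔ ∀ p ∈ cd l, (p.1, p.2 + 1) ∈ cd l → T p < T (p.1, p.2 + 1) :=
  ⟨fun h p => h p.1 p.2, fun h i j => h (i, j)⟩

lemma forall_lt_step_iff_erase {s : Finset (ℕ × ℕ)} {p₀ : ℕ × ℕ} {T : ℕ × ℕ → ℕ}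
    (σ : ℕ × ℕ → ℕ × ℕ) (hσ : σ p₀ ∉ s) (hlt : ∀ p ∈ s.erase p₀, T p < T p₀) :
    (∀ p ∈ s, σ p ∈ s → T p < T (σ p)) ↔
      ∀ p ∈ s.erase p₀, σ p ∈ s.erase p₀ → T p < T (σ p) := by
  refine ⟨fun h p hp hσp => h p (mem_of_mem_erase hp) (mem_of_mem_erase hσp),
    fun h p hp hσp => ?_⟩
  have hp₀ : p ≠ p₀ := by rintro rfl; exact hσ hσp
  by_cases hσp₀ : σ p = p₀
  · rw [hσp₀]; exact hlt p (mem_erase.2 ⟨hp₀, hp⟩)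
  · exact h p (mem_erase.2 ⟨hp₀, hp⟩) (mem_erase.2 ⟨hσp₀, hσp⟩)

lemma rowsIncrease_congr {l : List ℕ} {T T' : ℕ × ℕ → ℕ} (h : Set.EqOn T T' (cd l)) :
    RowsIncrease l T ↔ RowsIncrease l T' := by
  simp only [rowsIncrease_iff]
  exact forall₂_congr fun p hp => imp_congr_right fun hq => by rw [h hp, h hq]

lemma colsIncrease_congr {l : List ℕ} {T T' : ℕ × ℕ → ℕ} (h : Set.EqOn T T' (cd l)) :
    ColsIncrease l T ↔ ColsIncrease l T' := by
  simp only [colsIncrease_iff]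
  exact forall₂_congr fun p hp => imp_congr_right fun hq => by rw [h hp, h hq]

lemma peakCond_congr {l : List ℕ} {T T' : ℕ × ℕ → ℕ} (h : Set.EqOn T T' (cd l)) :
    PeakCond l T ↔ PeakCond l T' := by
  have hfilter (k : ℕ) : (cd l).filter (T · ≤ k) = (cd l).filter (T' · ≤ k) :=
    filter_congr fun p hp => by rw [h hp]
  simp only [PeakCond, hfilter]

structure IsCornerRemoval (l l' : List ℕ) (p₀ : ℕ × ℕ) : Prop where
  cd_eq : cd l' = (cd l).erase p₀
  sum_eq : l'.sum + 1 = l.sum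
  mem_cd_s19 : p₀ ∈ cd l
  right_notMem : (p₀.1 + 1, p₀.2) ∉ cd l
  up_notMem : (p₀.1, p₀.2 + 1) ∉ cd l

namespace IsCornerRemoval

variable {l l' : List ℕ} {p₀ : ℕ × ℕ} {T : ℕ × ℕ → ℕ}

lemma notMem_cd (h : IsCornerRemoval l l' p₀) : p₀ ∉ cd l' := by
  simp [h.cd_eq]

lemma coe_cd (h : IsCornerRemoval l l' p₀) : (cd l : Set (ℕ × ℕ)) = insert p₀ ↑(cd l') := by
  rw [h.cd_eq, coe_erase, Set.insert_sdiff_singleton, Set.insert_eq_of_mem (mem_coe.2 h.mem_cd_s19)]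

lemma eqOn_update (h : IsCornerRemoval l l' p₀) (v : ℕ) :
    Set.EqOn (Function.update T p₀ v) T (cd l') := fun _ hp =>
  Function.update_of_ne (ne_of_mem_of_not_mem hp h.notMem_cd) _ _

lemma isStandardFilling_iff (h : IsCornerRemoval l l' p₀) (hT : T p₀ = l.sum) :
    IsStandardFilling l T ↔ IsStandardFilling l' (Function.update T p₀ 0) := by
  have heq := h.eqOn_update (T := T) 0
  have hIcc : Set.Icc 1 l.sum = insert (T p₀) (Set.Icc 1 l'.sum) := by
    rw [hT, ← h.sum_eq, Set.insert_Icc_right_eq_Icc_add_one (by omega)]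
  rw [IsStandardFilling, IsStandardFilling, heq.bijOn_iff, h.coe_cd, hIcc,
    Set.BijOn.insert_iff h.notMem_cd (by simp [hT, ← h.sum_eq])]
  refine and_congr_right fun _ => forall_congr' fun p => ?_
  rcases eq_or_ne p p₀ with rfl | hp
  · simp [h.mem_cd_s19]
  · simp [h.cd_eq, hp]

lemma rowsIncrease_iff (h : IsCornerRemoval l l' p₀) (hlt : ∀ p ∈ cd l', T p < T p₀) :
    RowsIncrease l T ↔ RowsIncrease l' T := by
  rw [PaperSPIT.rowsIncrease_iff, PaperSPIT.rowsIncrease_iff, h.cd_eq]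
  exact forall_lt_step_iff_erase _ h.right_notMem (h.cd_eq ▸ hlt)

lemma colsIncrease_iff (h : IsCornerRemoval l l' p₀) (hlt : ∀ p ∈ cd l', T p < T p₀) :
    ColsIncrease l T ↔ ColsIncrease l' T := by
  rw [PaperSPIT.colsIncrease_iff, PaperSPIT.colsIncrease_iff, h.cd_eq]
  exact forall_lt_step_iff_erase _ h.up_notMem (h.cd_eq ▸ hlt)

lemma peakCond_iff (h : IsCornerRemoval l l' p₀) (hl : IsPeakComposition l.sum l)
    (hT : T p₀ = l.sum) (hlt : ∀ p ∈ cd l', T p < T p₀) :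
    PeakCond l T ↔ PeakCond l' T := by
  have hsum := h.sum_eq
  have hfilter : ∀ k ≤ l'.sum, (cd l).filter (T · ≤ k) = (cd l').filter (T · ≤ k) := by
    intro k hk
    rw [h.cd_eq, filter_erase, erase_eq_of_notMem]
    simp only [mem_filter, not_and, not_le]
    exact fun _ => by omega
  refine ⟨fun hP k hk hkl => hfilter k hkl ▸ hP k hk (by omega), fun hP k hk hkl => ?_⟩
  rcases hkl.lt_or_eq with hkl' | rfl
  · exact hfilter k (by omega) ▸ hP k hk (by omega)
  · refine ⟨l, hl, filter_true_of_mem fun p hp => ?_⟩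
    rcases eq_or_ne p p₀ with rfl | hp₀
    · exact hT.le
    · exact (hlt p (h.cd_eq ▸ mem_erase.2 ⟨hp₀, hp⟩)).le.trans hT.le

lemma mem_SPYTset_iff (h : IsCornerRemoval l l' p₀) (hl : IsPeakComposition l.sum l)
    (hT : T p₀ = l.sum) : T ∈ SPYTset l ↔ Function.update T p₀ 0 ∈ SPYTset l' := by
  have heq := h.eqOn_update (T := T) 0
  simp only [SPYTset, Set.mem_ofPred_eq, IsSYT, and_assoc, h.isStandardFilling_iff hT]
  refine and_congr_right fun hsf => ?_
  have hlt (p) (hp : p ∈ cd l') : T p < T p₀ := by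
    have hmem := hsf.1.mapsTo hp
    rw [heq hp, Set.mem_Icc] at hmem
    have := h.sum_eq
    omega
  rw [h.rowsIncrease_iff hlt, h.colsIncrease_iff hlt, h.peakCond_iff hl hT hlt,
    rowsIncrease_congr heq, colsIncrease_congr heq, peakCond_congr heq]

/-- Erasing the largest entry from the corner `p₀` is a bijection onto `SPYT(l')`. -/
lemma ncard_SPYTset_eq (h : IsCornerRemoval l l' p₀) (hl : IsPeakComposition l.sum l) :
    {T | T ∈ SPYTset l ∧ T p₀ = l.sum}.ncard = (SPYTset l').ncard := by
  have hrestore {T : ℕ × ℕ → ℕ} (hT : T p₀ = l.sum) :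
      Function.update (Function.update T p₀ 0) p₀ l.sum = T := by
    rw [Function.update_idem, ← hT, Function.update_eq_self]
  refine Set.ncard_congr (fun T _ => Function.update T p₀ 0)
    (fun T hT => (h.mem_SPYTset_iff hl hT.2).1 hT.1)
    (fun T₁ T₂ hT₁ hT₂ he => by rw [← hrestore hT₁.2, ← hrestore hT₂.2, he]) fun T' hT' => ?_
  have hT'₀ : T' p₀ = 0 := hT'.1.1.2 p₀ h.notMem_cd
  refine ⟨Function.update T' p₀ l.sum, ⟨?_, Function.update_self ..⟩, ?_⟩
  · rwa [h.mem_SPYTset_iff hl (Function.update_self ..), Function.update_idem,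
      ← hT'₀, Function.update_eq_self]
  · rw [Function.update_idem, ← hT'₀, Function.update_eq_self]

end IsCornerRemoval

lemma SPYTset_finite (l : List ℕ) : (SPYTset l).Finite := by
  have hlt {T} (hT : T ∈ SPYTset l) (p : cd l) : T p < l.sum + 1 :=
    Nat.lt_succ_of_le (hT.1.1.1.mapsTo p.2).2
  have : Finite (SPYTset l) := by
    refine Finite.of_injective
      (fun T : SPYTset l => fun p : cd l => (⟨T.1 p, hlt T.2 p⟩ : Fin (l.sum + 1))) ?_
    intro T₁ T₂ he
    refine Subtype.ext (funext fun p => ?_)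
    by_cases hp : p ∈ cd l
    · exact congrArg Fin.val (congrFun he ⟨p, hp⟩)
    · rw [T₁.2.1.1.2 p hp, T₂.2.1.1.2 p hp]
  exact Set.toFinite _

lemma SPYTset_nil : SPYTset [] = {0} := by
  ext T
  have hpeak : PeakCond [] T := fun k hk hk0 => absurd (hk.trans hk0) (by decide)
  simp [SPYTset, IsSYT, IsStandardFilling, RowsIncrease, ColsIncrease, hpeak, cd_nil, funext_iff]

lemma exists_corner_eq_sum {l : List ℕ} {T : ℕ × ℕ → ℕ} (hT : IsSYT l T) (hn : 0 < l.sum) :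
    ∃ p ∈ cd l, T p = l.sum ∧ (p.1 + 1, p.2) ∉ cd l ∧ (p.1, p.2 + 1) ∉ cd l := by
  obtain ⟨⟨hbij, -⟩, hrows, hcols⟩ := hT
  obtain ⟨p, hp, hTp⟩ := hbij.surjOn (Set.mem_Icc.2 ⟨hn, le_rfl⟩ : l.sum ∈ Set.Icc 1 l.sum)
  have hle {q} (hq : q ∈ cd l) : T q ≤ l.sum := (hbij.mapsTo hq).2
  exact ⟨p, hp, hTp, fun hq => (hrows p.1 p.2 hp hq).not_ge (hTp ▸ hle hq),
    fun hq => (hcols p.1 p.2 hp hq).not_ge (hTp ▸ hle hq)⟩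

/-- After deleting `n` from `(2, j)`, row `j` would have a single box, which the peak
condition allows only in the top row. -/
lemma notMem_cd_of_eq_sum_two {l : List ℕ} {T : ℕ × ℕ → ℕ} {j : ℕ} (hT : T ∈ SPYTset l)
    (hj : (2, j) ∈ cd l) (hTj : T (2, j) = l.sum) : (1, j + 1) ∉ cd l := by
  intro hj'
  obtain ⟨⟨⟨hbij, -⟩, -, -⟩, hpeak⟩ := hT
  have hlt {q} (hq : q ∈ cd l) (hne : q ≠ (2, j)) : T q < l.sum :=
    lt_of_le_of_ne (hbij.mapsTo hq).2 fun he => hne (hbij.injOn hq hj (he.trans hTj.symm))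
  have h1j : (1, j) ∈ cd l := by
    simp only [mem_cd_s19] at hj ⊢; omega
  have hn : 2 ≤ l.sum := by
    have := hlt h1j (by simp); have := (hbij.mapsTo h1j).1; omega
  obtain ⟨β, ⟨-, hβ⟩, hfilter⟩ := hpeak (l.sum - 1) (by omega) (by omega)
  have hmem {q} : q ∈ cd β ↔ q ∈ cd l ∧ q ≠ (2, j) := by
    rw [← hfilter, mem_filter]
    refine and_congr_right fun hq => ⟨fun hle he => ?_, fun hne => ?_⟩
    · rw [he, hTj] at hle; omega
    · have := hlt hq hne; omega
  have h₁ := mem_cd_s19.1 (hmem.2 ⟨h1j, by simp⟩)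
  have h₂ := mem_cd_s19.1 (hmem.2 ⟨hj', by simp⟩)
  have h₃ : (2, j) ∉ cd β := fun h => (hmem.1 h).2 rfl
  rw [mem_cd_s19] at h₃
  have := hβ (j - 1) (by dsimp only at h₁ h₂; omega)
  simp only [part] at h₁ h₃
  omega

lemma ncard_SPYTset_eq_add {l : List ℕ} {p₁ p₂ : ℕ × ℕ} (h₁ : p₁ ∈ cd l) (h₂ : p₂ ∈ cd l)
    (hne : p₁ ≠ p₂) (hcover : ∀ T ∈ SPYTset l, T p₁ = l.sum ∨ T p₂ = l.sum) :
    (SPYTset l).ncard = {T | T ∈ SPYTset l ∧ T p₁ = l.sum}.ncard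
      + {T | T ∈ SPYTset l ∧ T p₂ = l.sum}.ncard := by
  have hunion : SPYTset l = {T | T ∈ SPYTset l ∧ T p₁ = l.sum}
      ∪ {T | T ∈ SPYTset l ∧ T p₂ = l.sum} := by
    ext T
    simp only [Set.mem_union, Set.mem_ofPred_eq, ← and_or_left]
    exact ⟨fun hT => ⟨hT, hcover T hT⟩, And.left⟩
  have hdisj : Disjoint {T | T ∈ SPYTset l ∧ T p₁ = l.sum} {T | T ∈ SPYTset l ∧ T p₂ = l.sum} :=
    Set.disjoint_left.2 fun T ⟨hT, e₁⟩ ⟨_, e₂⟩ =>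
      hne (hT.1.1.1.injOn h₁ h₂ (e₁.trans e₂.symm))
  conv_lhs => rw [hunion]
  exact Set.ncard_union_eq hdisj ((SPYTset_finite l).subset fun _ => And.left)
    ((SPYTset_finite l).subset fun _ => And.left)

lemma ncard_SPYTset_eq_of_forall {l : List ℕ} {p₁ : ℕ × ℕ}
    (hcover : ∀ T ∈ SPYTset l, T p₁ = l.sum) :
    (SPYTset l).ncard = {T | T ∈ SPYTset l ∧ T p₁ = l.sum}.ncard := by
  congr 1
  ext T
  exact ⟨fun hT => ⟨hT, hcover T hT⟩, And.left⟩

lemma colLen_cons (x : ℕ) (l : List ℕ) {i : ℕ} (hi : i ≤ x) :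
    colLen (x :: l) i = colLen l i + 1 := by
  simp [colLen, hi]

lemma hhat_cons {x : ℕ} {l : List ℕ} {p : ℕ × ℕ} (hx : 2 ≤ x) (hl : ∀ y ∈ l, y ≤ x)
    (hp : p ∈ cd l) : hhat (x :: l) (p.1, p.2 + 1) = hhat l p := by
  obtain ⟨hi, hj, hjl, hip⟩ := mem_cd_s19.1 hp
  have hpart : part l p.2 ≤ x := hl _ (part_mem hj hjl)
  simp only [hhat, part_cons_succ x l hj, colLen_cons x l (by omega : 1 ≤ x),
    colLen_cons x l hx, Nat.add_sub_add_right]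
  split_ifs
  · rfl
  · rfl
  · rw [colLen_cons x l (by omega : 3 ≤ x), Nat.add_sub_add_right]

lemma prod_hhat_cons {x : ℕ} {l : List ℕ} (hx : 2 ≤ x) (hl : ∀ y ∈ l, y ≤ x) :
    ∏ p ∈ cd (x :: l), hhat (x :: l) p =
      (∏ i ∈ Icc 1 x, hhat (x :: l) (i, 1)) * ∏ p ∈ cd l, hhat l p := by
  have hinj : Set.InjOn (Prod.map id (· + 1) : ℕ × ℕ → ℕ × ℕ) (cd l) :=
    (Prod.map_injective.2 ⟨Function.injective_id, add_left_injective 1⟩).injOn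
  rw [cd_cons, prod_union, prod_product, prod_image hinj]
  · simp only [prod_singleton, Prod.map, id]
    congr 1
    exact prod_congr rfl fun p hp => hhat_cons hx hl hp
  · rw [disjoint_left]
    simp only [mem_product, mem_singleton, mem_image, mem_cd_s19, not_exists, not_and]
    rintro ⟨i, j⟩ ⟨-, rfl⟩ ⟨i', j'⟩ ⟨-, hj', -⟩ h
    simp only [Prod.map, Prod.mk.injEq] at h
    omega

def shape (a b c : ℕ) : List ℕ := List.replicate a 3 ++ List.replicate b 2 ++ List.replicate c 1

lemma length_shape (a b c : ℕ) : (shape a b c).length = a + b + c := by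
  simp only [shape, List.length_append, List.length_replicate]

lemma sum_shape (a b c : ℕ) : (shape a b c).sum = 3 * a + 2 * b + c := by
  simp only [shape, List.sum_append, List.sum_replicate, smul_eq_mul]; ring

lemma getD_shape (a b c k : ℕ) :
    (shape a b c).getD k 0 =
      if k < a then 3 else if k < a + b then 2 else if k < a + b + c then 1 else 0 := by
  simp only [shape, List.getD_eq_getElem?_getD, List.getElem?_append, List.getElem?_replicate,
    List.length_append, List.length_replicate]
  split_ifs <;> first | omega | simp

lemma mem_cd_shape {a b c : ℕ} {p : ℕ × ℕ} :
    p ∈ cd (shape a b c) ↔ 1 ≤ p.1 ∧ 1 ≤ p.2 ∧ (p.2 ≤ a ∧ p.1 ≤ 3 ∨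
      a < p.2 ∧ p.2 ≤ a + b ∧ p.1 ≤ 2 ∨ a + b < p.2 ∧ p.2 ≤ a + b + c ∧ p.1 ≤ 1) := by
  rw [mem_cd_s19, length_shape, part, getD_shape]
  split_ifs <;> omega

lemma colLen_shape (a b c : ℕ) :
    colLen (shape a b c) 1 = a + b + c ∧ colLen (shape a b c) 2 = a + b ∧
      colLen (shape a b c) 3 = a := by
  simp only [colLen, shape, List.countP_append, List.countP_replicate]
  norm_num

lemma isPeakComposition_shape {a b c : ℕ} (hc : c ≤ 1) :
    IsPeakComposition (shape a b c).sum (shape a b c) := by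
  refine ⟨⟨fun x hx => ?_, rfl⟩, fun k hk => ?_⟩
  · simp only [shape, List.mem_append, List.mem_replicate] at hx
    omega
  · rw [length_shape] at hk
    rw [getD_shape]
    split_ifs <;> omega

lemma le_one_of_isPeakComposition_shape {n a b c : ℕ}
    (h : IsPeakComposition n (shape a b c)) : c ≤ 1 := by
  by_contra hc
  have := h.2 (a + b) (by rw [length_shape]; omega)
  rw [getD_shape] at this
  split_ifs at this <;> omega

lemma eq_shape_of_pairwise {l : List ℕ} (hl : l.Pairwise (· ≥ ·)) (hpos : ∀ x ∈ l, 0 < x)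
    (hle : ∀ x ∈ l, x ≤ 3) : ∃ a b c, l = shape a b c := by
  induction l with
  | nil => exact ⟨0, 0, 0, rfl⟩
  | cons x l ih =>
    simp only [List.pairwise_cons, List.mem_cons, forall_eq_or_imp] at hl hpos hle
    obtain ⟨a, b, c, rfl⟩ := ih hl.2 hpos.2 hle.2
    have hx : ∀ y ∈ shape a b c, y ≤ x := hl.1
    simp only [shape, List.mem_append, List.mem_replicate] at hx
    obtain rfl | rfl | rfl : x = 1 ∨ x = 2 ∨ x = 3 := by omega
    · obtain rfl : a = 0 := by_contra fun h => by have := hx 3 (.inl (.inl ⟨h, rfl⟩)); omega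
      obtain rfl : b = 0 := by_contra fun h => by have := hx 2 (.inl (.inr ⟨h, rfl⟩)); omega
      exact ⟨0, 0, c + 1, rfl⟩
    · obtain rfl : a = 0 := by_contra fun h => by have := hx 3 (.inl (.inl ⟨h, rfl⟩)); omega
      exact ⟨0, b + 1, c, rfl⟩
    · exact ⟨a + 1, b, c, rfl⟩

lemma le_of_mem_shape {a b c x : ℕ} (hx : x ∈ shape a b c) : x ≤ 3 ∧ (a = 0 → x ≤ 2) := by
  simp only [shape, List.mem_append, List.mem_replicate] at hx
  omega

lemma shape_succ_left (a b c : ℕ) : shape (a + 1) b c = 3 :: shape a b c := rfl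

lemma shape_zero_succ (b c : ℕ) : shape 0 (b + 1) c = 2 :: shape 0 b c := rfl

lemma prod_hhat_bottom_succ_left (a b c : ℕ) :
    ∏ i ∈ Icc 1 3, hhat (shape (a + 1) b c) (i, 1) =
      (2 * a + 2 * b + c + 3) * (2 * a + 2 * b + c + 2) * (a + 1) := by
  obtain ⟨h₁, h₂, h₃⟩ := colLen_shape (a + 1) b c
  have hpart : part (shape (a + 1) b c) 1 = 3 := rfl
  rw [show Icc 1 3 = {1, 2, 3} from rfl, prod_insert (by decide), prod_insert (by decide),
    prod_singleton, ← mul_assoc]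
  simp only [hhat, h₁, h₂, h₃, hpart, Nat.reduceEqDiff, reduceIte]
  congr 2 <;> omega

lemma prod_hhat_bottom_zero_succ (b c : ℕ) :
    ∏ i ∈ Icc 1 2, hhat (shape 0 (b + 1) c) (i, 1) = (2 * b + c + 2) * (2 * b + c + 1) := by
  obtain ⟨h₁, h₂, -⟩ := colLen_shape 0 (b + 1) c
  have hpart : part (shape 0 (b + 1) c) 1 = 2 := rfl
  rw [show Icc 1 2 = {1, 2} from rfl, prod_pair (by decide)]
  simp only [hhat, h₁, h₂, hpart, Nat.reduceEqDiff, reduceIte]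
  congr 1 <;> omega

open Nat in
lemma prod_hhat_shape_zero {b c : ℕ} (hc : c ≤ 1) :
    (2 * b + c + 1) * ∏ p ∈ cd (shape 0 b c), hhat (shape 0 b c) p = (2 * b + c + 1)! := by
  induction b with
  | zero =>
    obtain rfl | rfl : c = 0 ∨ c = 1 := by omega
    · rfl
    · rfl
  | succ b ih =>
    rw [shape_zero_succ, prod_hhat_cons le_rfl fun _ hx => (le_of_mem_shape hx).2 rfl,
      ← shape_zero_succ, prod_hhat_bottom_zero_succ,
      show 2 * (b + 1) + c + 1 = 2 * b + c + 1 + 1 + 1 by ring, factorial_succ (_ + 1),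
      factorial_succ (2 * b + c + 1)]
    linear_combination (2 * b + c + 3) * (2 * b + c + 2) * ih

open Nat in
lemma prod_hhat_shape {a b c : ℕ} (hc : c ≤ 1) :
    (2 * b + c + 1) * ∏ p ∈ cd (shape a b c), hhat (shape a b c) p =
      a ! * (2 * a + 2 * b + c + 1)! := by
  induction a with
  | zero => simpa using prod_hhat_shape_zero hc
  | succ a ih =>
    rw [shape_succ_left, prod_hhat_cons (by norm_num) fun _ hx => (le_of_mem_shape hx).1,
      ← shape_succ_left, prod_hhat_bottom_succ_left,
      show 2 * (a + 1) + 2 * b + c + 1 = 2 * a + 2 * b + c + 1 + 1 + 1 by ring,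
      factorial_succ (_ + 1), factorial_succ (_ + 1), factorial_succ a]
    linear_combination (2 * a + 2 * b + c + 3) * (2 * a + 2 * b + c + 2) * (a + 1) * ih

lemma isCornerRemoval_three (a b c : ℕ) :
    IsCornerRemoval (shape (a + 1) b c) (shape a (b + 1) c) (3, a + 1) where
  cd_eq := by ext ⟨i, j⟩; simp only [mem_erase, mem_cd_shape, ne_eq, Prod.mk.injEq]; omega
  sum_eq := by simp only [sum_shape]; omega
  mem_cd_s19 := by simp only [mem_cd_shape]; omega
  right_notMem := by simp only [mem_cd_shape]; omega
  up_notMem := by simp only [mem_cd_shape]; omega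

lemma isCornerRemoval_two (a b : ℕ) :
    IsCornerRemoval (shape a (b + 1) 0) (shape a b 1) (2, a + b + 1) where
  cd_eq := by ext ⟨i, j⟩; simp only [mem_erase, mem_cd_shape, ne_eq, Prod.mk.injEq]; omega
  sum_eq := by simp only [sum_shape]; omega
  mem_cd_s19 := by simp only [mem_cd_shape]; omega
  right_notMem := by simp only [mem_cd_shape]; omega
  up_notMem := by simp only [mem_cd_shape]; omega

lemma isCornerRemoval_one (a b : ℕ) :
    IsCornerRemoval (shape a b 1) (shape a b 0) (1, a + b + 1) where
  cd_eq := by ext ⟨i, j⟩; simp only [mem_erase, mem_cd_shape, ne_eq, Prod.mk.injEq]; omega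
  sum_eq := by simp only [sum_shape]
  mem_cd_s19 := by simp only [mem_cd_shape]; omega
  right_notMem := by simp only [mem_cd_shape]; omega
  up_notMem := by simp only [mem_cd_shape]; omega

lemma eq_sum_of_mem_SPYTset_shape {a b c : ℕ} {T : ℕ × ℕ → ℕ} (hc : c ≤ 1)
    (hT : T ∈ SPYTset (shape a b c)) (hn : 0 < a + b + c) :
    (0 < a ∧ T (3, a) = (shape a b c).sum) ∨ (0 < b ∧ c = 0 ∧ T (2, a + b) = (shape a b c).sum) ∨
      (c = 1 ∧ T (1, a + b + 1) = (shape a b c).sum) := by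
  obtain ⟨⟨i, j⟩, hp, hTp, hright, hup⟩ :=
    exists_corner_eq_sum hT.1 (by rw [sum_shape]; omega)
  have hp' := mem_cd_shape.1 hp
  simp only [mem_cd_shape] at hright hup
  obtain ⟨rfl, rfl⟩ | ⟨rfl, rfl, hb⟩ | ⟨rfl, rfl, rfl⟩ :
      i = 3 ∧ j = a ∨ i = 2 ∧ j = a + b ∧ 0 < b ∨ i = 1 ∧ j = a + b + 1 ∧ c = 1 := by omega
  · exact .inl ⟨by omega, hTp⟩
  · refine .inr (.inl ⟨hb, ?_, hTp⟩)
    by_contra hc1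
    exact notMem_cd_of_eq_sum_two hT hp hTp (mem_cd_shape.2 (by dsimp only; omega))
  · exact .inr (.inr ⟨rfl, hTp⟩)

lemma ncard_SPYTset_shape_zero_one (b : ℕ) :
    (SPYTset (shape 0 b 1)).ncard = (SPYTset (shape 0 b 0)).ncard := by
  rw [ncard_SPYTset_eq_of_forall (p₁ := (1, 0 + b + 1)) fun T hT => ?_,
    (isCornerRemoval_one 0 b).ncard_SPYTset_eq (isPeakComposition_shape le_rfl)]
  rcases eq_sum_of_mem_SPYTset_shape le_rfl hT (by omega) with h | h | h
  · omega
  · omega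
  · exact h.2

lemma ncard_SPYTset_shape_succ_one (a b : ℕ) :
    (SPYTset (shape (a + 1) b 1)).ncard =
      (SPYTset (shape (a + 1) b 0)).ncard + (SPYTset (shape a (b + 1) 1)).ncard := by
  rw [ncard_SPYTset_eq_add (p₁ := (1, a + 1 + b + 1)) (p₂ := (3, a + 1))
      (isCornerRemoval_one _ _).mem_cd_s19 (isCornerRemoval_three _ _ _).mem_cd_s19 (by simp)
      fun T hT => ?_,
    (isCornerRemoval_one _ _).ncard_SPYTset_eq (isPeakComposition_shape le_rfl),
    (isCornerRemoval_three _ _ _).ncard_SPYTset_eq (isPeakComposition_shape le_rfl)]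
  rcases eq_sum_of_mem_SPYTset_shape le_rfl hT (by omega) with h | h | h
  · exact .inr h.2
  · omega
  · exact .inl h.2

lemma ncard_SPYTset_shape_zero_succ_zero (b : ℕ) :
    (SPYTset (shape 0 (b + 1) 0)).ncard = (SPYTset (shape 0 b 1)).ncard := by
  rw [ncard_SPYTset_eq_of_forall (p₁ := (2, 0 + b + 1)) fun T hT => ?_,
    (isCornerRemoval_two 0 b).ncard_SPYTset_eq (isPeakComposition_shape zero_le_one)]
  rcases eq_sum_of_mem_SPYTset_shape zero_le_one hT (by omega) with h | h | h
  · omega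
  · exact h.2.2
  · omega

lemma ncard_SPYTset_shape_succ_zero_zero (a : ℕ) :
    (SPYTset (shape (a + 1) 0 0)).ncard = (SPYTset (shape a 1 0)).ncard := by
  rw [ncard_SPYTset_eq_of_forall (p₁ := (3, a + 1)) fun T hT => ?_,
    (isCornerRemoval_three a 0 0).ncard_SPYTset_eq (isPeakComposition_shape zero_le_one)]
  rcases eq_sum_of_mem_SPYTset_shape zero_le_one hT (by omega) with h | h | h
  · exact h.2
  · omega
  · omega

lemma ncard_SPYTset_shape_succ_succ_zero (a b : ℕ) :
    (SPYTset (shape (a + 1) (b + 1) 0)).ncard =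
      (SPYTset (shape (a + 1) b 1)).ncard + (SPYTset (shape a (b + 2) 0)).ncard := by
  rw [ncard_SPYTset_eq_add (p₁ := (2, a + 1 + b + 1)) (p₂ := (3, a + 1))
      (isCornerRemoval_two _ _).mem_cd_s19 (isCornerRemoval_three _ _ _).mem_cd_s19 (by simp)
      fun T hT => ?_,
    (isCornerRemoval_two _ _).ncard_SPYTset_eq (isPeakComposition_shape zero_le_one),
    (isCornerRemoval_three _ _ _).ncard_SPYTset_eq (isPeakComposition_shape zero_le_one)]
  rcases eq_sum_of_mem_SPYTset_shape zero_le_one hT (by omega) with h | h | h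
  · exact .inr h.2
  · exact .inl h.2.2
  · omega

-- `n! / ∏ ĥ` for the shape `(3^a, 2^b, 1^c)`, written in terms of `k = 2b + c`.
open Nat in
def spytFormula (a k : ℕ) : ℚ := ((3 * a + k)! * (k + 1) : ℕ) / (a ! * (2 * a + k + 1)! : ℕ)

lemma spytFormula_zero (k : ℕ) : spytFormula 0 k = 1 := by
  rw [spytFormula, div_eq_one_iff_eq (by positivity)]
  simp [Nat.factorial_succ, mul_comm]

lemma spytFormula_succ_zero (a : ℕ) : spytFormula (a + 1) 0 = spytFormula a 2 := by
  simp only [spytFormula, show 3 * (a + 1) + 0 = 3 * a + 2 + 1 by ring,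
    show 2 * (a + 1) + 0 + 1 = 2 * a + 2 + 1 by ring, Nat.factorial_succ]
  push_cast
  field_simp
  ring

lemma spytFormula_succ_succ (a k : ℕ) :
    spytFormula (a + 1) (k + 1) = spytFormula (a + 1) k + spytFormula a (k + 3) := by
  simp only [spytFormula, show 3 * (a + 1) + (k + 1) = 3 * a + k + 3 + 1 by ring,
    show 3 * (a + 1) + k = 3 * a + k + 3 by ring, show 3 * a + (k + 3) = 3 * a + k + 3 by ring,
    show 2 * (a + 1) + (k + 1) + 1 = 2 * a + k + 3 + 1 by ring,
    show 2 * (a + 1) + k + 1 = 2 * a + k + 3 by ring,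
    show 2 * a + (k + 3) + 1 = 2 * a + k + 3 + 1 by ring, Nat.factorial_succ]
  push_cast
  field_simp
  ring

theorem ncard_SPYTset_shape : ∀ a b c : ℕ, c ≤ 1 →
    ((SPYTset (shape a b c)).ncard : ℚ) = spytFormula a (2 * b + c)
  | 0, 0, 0, _ => by
    rw [show shape 0 0 0 = [] from rfl, SPYTset_nil, Set.ncard_singleton, spytFormula_zero,
      Nat.cast_one]
  | 0, b, 1, _ => by
    rw [ncard_SPYTset_shape_zero_one, ncard_SPYTset_shape 0 b 0 zero_le_one, spytFormula_zero,
      spytFormula_zero]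
  | 0, b + 1, 0, _ => by
    rw [ncard_SPYTset_shape_zero_succ_zero, ncard_SPYTset_shape 0 b 1 le_rfl, spytFormula_zero,
      spytFormula_zero]
  | a + 1, 0, 0, _ => by
    rw [ncard_SPYTset_shape_succ_zero_zero, ncard_SPYTset_shape a 1 0 zero_le_one,
      spytFormula_succ_zero]
  | a + 1, b, 1, _ => by
    rw [ncard_SPYTset_shape_succ_one, Nat.cast_add, ncard_SPYTset_shape (a + 1) b 0 zero_le_one,
      ncard_SPYTset_shape a (b + 1) 1 le_rfl]
    exact (spytFormula_succ_succ a (2 * b)).symm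
  | a + 1, b + 1, 0, _ => by
    rw [ncard_SPYTset_shape_succ_succ_zero, Nat.cast_add, ncard_SPYTset_shape (a + 1) b 1 le_rfl,
      ncard_SPYTset_shape a (b + 2) 0 zero_le_one]
    exact (spytFormula_succ_succ a (2 * b + 1)).symm
  | _, _, c + 2, hc => absurd hc (by omega)
termination_by a b c => 3 * a + 2 * b + c

theorem SPYT_hook_length_formula_general (n : ℕ) (l : List ℕ)
    (hsorted : l.Pairwise (· ≥ ·)) (hpeak : IsPeakComposition n l)
    (hparts : ∀ a ∈ l, a ≤ 3) :
    (SPYTset l).ncard * ∏ p ∈ cd l, hhat l p = n.factorial := by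
  obtain ⟨a, b, c, rfl⟩ := eq_shape_of_pairwise hsorted hpeak.1.1 hparts
  have hc := le_one_of_isPeakComposition_shape hpeak
  have hcount : (SPYTset (shape a b c)).ncard * (a.factorial * (2 * a + 2 * b + c + 1).factorial) =
      (3 * a + 2 * b + c).factorial * (2 * b + c + 1) := by
    have h := ncard_SPYTset_shape a b c hc
    rw [spytFormula, eq_div_iff (by positivity)] at h
    simp only [← add_assoc] at h
    exact_mod_cast h
  rw [← hpeak.1.2, sum_shape]
  refine Nat.eq_of_mul_eq_mul_right (by omega : 0 < 2 * b + c + 1) ?_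
  calc _ = (SPYTset (shape a b c)).ncard *
        ((2 * b + c + 1) * ∏ p ∈ cd (shape a b c), hhat (shape a b c) p) := by ring
    _ = _ := by rw [prod_hhat_shape hc, hcount]

/-- For a peak partition `l` of `n` with every part at most `3`,
`|SPYT(l)| · ∏_{c ∈ cd(l)} ĥ_l(c) = n!`. -/
theorem SPYT_hook_length_formula (n : ℕ) (l : List ℕ) (hcomp : IsComposition n l)
    (hsorted : l.Pairwise (· ≥ ·)) (hpeak : IsPeakComposition n l)
    (hparts : ∀ a ∈ l, a ≤ 3) :
    (SPYTset l).ncard * ∏ p ∈ cd l, hhat l p = n.factorial :=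
  SPYT_hook_length_formula_general n l hsorted hpeak hparts

end PaperSPIT
end
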